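/- arXiv:2601.22152 — 3 statements merged into one kernel-verified Lean document; each statement's English description precedes it below -/
import Mathlib

section
/- Let n ∈ ℕ and let P : Fin n → ℕ satisfy P i ≤ 2 for all i. Let S = ∑_i P i and suppose there exists an index j with P j = 1. Then for every natural number t with t ≤ S, there exists a Finset I of Fin n such that ∑_{i ∈ I} P i = t. -/
lemma subset_sum_aux (n : ℕ) (P : Fin n → ℕ) (hP : ∀ i, P i ≤ 2) :
    ∀ t : ℕ, ∀ s : Finset (Fin n), t ≤ ∑ i ∈ s, P i →
      (Even t ∨ ∃ i ∈ s, P i = 1) → ∃ I ⊆ s, ∑ i ∈ I, P i = t := by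
  intro t
  induction t using Nat.strong_induction_on with
  | _ t ih =>
    intro s hle hpar
    rcases Nat.eq_zero_or_pos t with rfl | htpos
    · exact ⟨∅, Finset.empty_subset _, by simp⟩
    by_cases hodd : Odd t
    · -- must use a 1
      obtain ⟨i, his, hi1⟩ := hpar.resolve_left (Nat.not_even_iff_odd.mpr hodd)
      have hsum : ∑ k ∈ s.erase i, P k = (∑ k ∈ s, P k) - 1 := by
        rw [← Finset.add_sum_erase s P his, hi1]; omega
      obtain ⟨I, hIsub, hIsum⟩ := ih (t - 1) (by omega) (s.erase i)
        (by omega) (Or.inl (by rcases hodd with ⟨k, rfl⟩; exact ⟨k, by omega⟩))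
      have hiI : i ∉ I := fun h => (Finset.mem_erase.mp (hIsub h)).1 rfl
      refine ⟨insert i I, ?_, ?_⟩
      · exact Finset.insert_subset his (hIsub.trans (Finset.erase_subset _ _))
      · rw [Finset.sum_insert hiI, hIsum, hi1]; omega
    · have heven : Even t := Nat.not_odd_iff_even.mp hodd
      by_cases h2 : ∃ i ∈ s, P i = 2
      · obtain ⟨i, his, hi2⟩ := h2
        have hsum : ∑ k ∈ s.erase i, P k = (∑ k ∈ s, P k) - 2 := by
          rw [← Finset.add_sum_erase s P his, hi2]; omega
        have ht2 : 2 ≤ t := by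
          rcases heven with ⟨k, rfl⟩; omega
        obtain ⟨I, hIsub, hIsum⟩ := ih (t - 2) (by omega) (s.erase i)
          (by omega) (Or.inl (by rcases heven with ⟨k, rfl⟩; exact ⟨k - 1, by omega⟩))
        have hiI : i ∉ I := fun h => (Finset.mem_erase.mp (hIsub h)).1 rfl
        refine ⟨insert i I, ?_, ?_⟩
        · exact Finset.insert_subset his (hIsub.trans (Finset.erase_subset _ _))
        · rw [Finset.sum_insert hiI, hIsum, hi2]; omega
      · -- all values in s are ≤ 1
        have hall1 : ∀ i ∈ s, P i ≤ 1 := by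
          intro i his
          have := hP i
          by_contra h
          exact h2 ⟨i, his, by omega⟩
        -- there is some i ∈ s with P i = 1 since sum ≥ t ≥ 1
        have hpos : 0 < ∑ i ∈ s, P i := by omega
        obtain ⟨i, his, hi⟩ : ∃ i ∈ s, P i ≠ 0 := by
          by_contra h
          push_neg at h
          simp [Finset.sum_eq_zero h] at hpos
        have hi1 : P i = 1 := by have := hall1 i his; omega
        have hsum : ∑ k ∈ s.erase i, P k = (∑ k ∈ s, P k) - 1 := by
          rw [← Finset.add_sum_erase s P his, hi1]; omega
        have ht2 : 2 ≤ t := by rcases heven with ⟨k, rfl⟩; omega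
        have h1e : ∃ k ∈ s.erase i, P k = 1 := by
          have hpos' : 0 < ∑ k ∈ s.erase i, P k := by omega
          obtain ⟨k, hks, hk⟩ : ∃ k ∈ s.erase i, P k ≠ 0 := by
            by_contra h
            push_neg at h
            simp [Finset.sum_eq_zero h] at hpos'
          exact ⟨k, hks, by have := hall1 k (Finset.mem_of_mem_erase hks); omega⟩
        obtain ⟨I, hIsub, hIsum⟩ := ih (t - 1) (by omega) (s.erase i)
          (by omega) (Or.inr h1e)
        have hiI : i ∉ I := fun h => (Finset.mem_erase.mp (hIsub h)).1 rfl
        refine ⟨insert i I, ?_, ?_⟩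
        · exact Finset.insert_subset his (hIsub.trans (Finset.erase_subset _ _))
        · rw [Finset.sum_insert hiI, hIsum, hi1]; omega

/-- if `P : Fin n → ℕ` takes values `≤ 2` and some value equals `1`,
then every natural number `t ≤ ∑ i, P i` is a subset sum of `P`. -/
theorem subset_sum_of_exists_one (n : ℕ) (P : Fin n → ℕ) (hP : ∀ i, P i ≤ 2)
    (j : Fin n) (hj : P j = 1) (t : ℕ) (hle : t ≤ ∑ i, P i) :
    ∃ I : Finset (Fin n), ∑ i ∈ I, P i = t := by
  obtain ⟨I, _, hI⟩ := subset_sum_aux n P hP t Finset.univ hle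
    (Or.inr ⟨j, Finset.mem_univ j, hj⟩)
  exact ⟨I, hI⟩
end

section
/- Let n ∈ ℕ, let P : Fin n → ℕ satisfy P i ≤ 2 for all i, let S = ∑_i P i (viewed as an integer), and let e ∈ ℤ. If |e| ≤ S and e ≡ S (mod 4), then there exists ε : Fin n → ℤ with ε i ∈ {1, -1} for all i, such that ∑_i (P i : ℤ) * ε i = e. -/
theorem subset_sum_exists : ∀ (n : ℕ) (P : Fin n → ℕ), (∀ i, P i ≤ 2) →
    ∀ m : ℕ, 2 ∣ m → m ≤ ∑ i, P i → ∃ T : Finset (Fin n), ∑ i ∈ T, P i = m := by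
  intro n
  induction n with
  | zero =>
    intro P hP m hm hle
    simp only [Finset.univ_eq_empty, Finset.sum_empty, Nat.le_zero] at hle
    exact ⟨∅, by simp [hle]⟩
  | succ n ih =>
    intro P hP m hm hle
    rw [Fin.sum_univ_succ] at hle
    by_cases h : m ≤ ∑ i : Fin n, P i.succ
    · obtain ⟨T, hT⟩ := ih (fun i => P i.succ) (fun i => hP _) m hm h
      refine ⟨T.map (Fin.succEmb n), ?_⟩
      rw [Finset.sum_map]
      exact hT
    · push_neg at h
      have hbeta : ∑ i : Fin n, (fun i => P i.succ) i = ∑ i : Fin n, P i.succ := rfl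
      have h1 : 1 ≤ P 0 := by omega
      by_cases h2 : P 0 = 2
      · obtain ⟨T, hT⟩ := ih (fun i => P i.succ) (fun i => hP _) (m - 2)
          (by omega) (by rw [hbeta]; omega)
        refine ⟨insert 0 (T.map (Fin.succEmb n)), ?_⟩
        rw [Finset.sum_insert (by simp [Fin.succ_ne_zero]), Finset.sum_map]
        simp only [Fin.succEmb, Function.Embedding.coeFn_mk] at hT ⊢
        omega
      · have h0 := hP 0
        have h3 : P 0 = 1 := by omega
        refine ⟨Finset.univ, ?_⟩
        rw [Fin.sum_univ_succ]
        omega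

/-- if `P : Fin n → ℕ` takes values `≤ 2`, `S = ∑ i, P i`,
`|e| ≤ S` and `e ≡ S (mod 4)`, then `e` is realised as a signed sum
`∑ i, P i * ε i` with signs `ε i ∈ {1, -1}`. -/
theorem signed_sum_exists (n : ℕ) (P : Fin n → ℕ) (hP : ∀ i, P i ≤ 2) (e : ℤ)
    (habs : |e| ≤ ∑ i, (P i : ℤ))
    (hmod : e ≡ ∑ i, (P i : ℤ) [ZMOD 4]) :
    ∃ ε : Fin n → ℤ, (∀ i, ε i = 1 ∨ ε i = -1) ∧ ∑ i, (P i : ℤ) * ε i = e := by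
  have hcast : ∑ i, (P i : ℤ) = ((∑ i, P i : ℕ) : ℤ) := by push_cast; rfl
  have hd : (4 : ℤ) ∣ (∑ i, (P i : ℤ)) - e := hmod.dvd
  obtain ⟨c, hc⟩ := hd
  have habs' := abs_le.mp habs
  obtain ⟨m, hm2, hmle, hme⟩ : ∃ m : ℕ, 2 ∣ m ∧ m ≤ ∑ i, P i ∧
      ((∑ i, P i : ℕ) : ℤ) - 2 * m = e := by
    refine ⟨(2 * c).toNat, ?_, ?_, ?_⟩ <;> omega
  obtain ⟨T, hT⟩ := subset_sum_exists n P hP m hm2 hmle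
  refine ⟨fun i => if i ∈ T then -1 else 1, fun i => by by_cases h : i ∈ T <;> simp [h], ?_⟩
  have key : ∑ i, (P i : ℤ) * (if i ∈ T then -1 else 1)
      = ∑ i, ((P i : ℤ) - if i ∈ T then 2 * (P i : ℤ) else 0) := by
    apply Finset.sum_congr rfl
    intro i _
    by_cases h : i ∈ T <;> simp [h] <;> ring
  rw [key, Finset.sum_sub_distrib, Finset.sum_ite_mem, Finset.univ_inter,
    ← Finset.mul_sum]
  have : ∑ i ∈ T, (P i : ℤ) = (m : ℤ) := by rw [← hT]; push_cast; rfl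
  rw [this, hcast, hme]
end

section
/- Let n ∈ ℕ, let P : Fin n → ℕ with every value P i even and P i ≤ 2 (i.e., P i ∈ {0,2}), let S = ∑_i P i (as an integer), and let e ∈ ℤ. Then there exists ε : Fin n → ℤ with ε i ∈ {1,-1} for all i and ∑_i (P i : ℤ) * ε i = e, if and only if |e| ≤ S and e ≡ S (mod 4). -/
private lemma signed_sum_aux : ∀ (n : ℕ) (P : Fin n → ℕ), (∀ i, P i = 0 ∨ P i = 2) → ∀ e : ℤ,
    |e| ≤ ∑ i, (P i : ℤ) → (4 : ℤ) ∣ (∑ i, (P i : ℤ)) - e →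
    ∃ ε : Fin n → ℤ, (∀ i, ε i = 1 ∨ ε i = -1) ∧ ∑ i, (P i : ℤ) * ε i = e := by
  intro n
  induction n with
  | zero =>
    intro P _ e he _
    simp only [Finset.univ_eq_empty, Finset.sum_empty] at he ⊢
    refine ⟨fun i => i.elim0, fun i => i.elim0, ?_⟩
    have : e = 0 := abs_nonpos_iff.mp he
    simp [this]
  | succ n ih =>
    intro P hP e he hmod
    rw [Fin.sum_univ_succ] at he hmod
    set S' : ℤ := ∑ i : Fin n, (P i.succ : ℤ) with hS'
    have hS'nonneg : 0 ≤ S' := Finset.sum_nonneg fun i _ => by positivity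
    have hS'even : (2 : ℤ) ∣ S' := Finset.dvd_sum fun i _ => by
      rcases hP i.succ with h | h <;> simp [h]
    rw [abs_le] at he
    rcases hP 0 with h0 | h0
    · rw [h0] at he hmod
      push_cast at he hmod
      obtain ⟨ε', hε', hsum⟩ := ih (fun i => P i.succ) (fun i => hP i.succ) e
        (show |e| ≤ S' by rw [abs_le]; omega) (show (4:ℤ) ∣ S' - e by omega)
      refine ⟨Fin.cons 1 ε', ?_, ?_⟩
      · intro i
        refine Fin.cases (Or.inl rfl) (fun j => hε' j) i
      · rw [Fin.sum_univ_succ]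
        simp only [Fin.cons_zero, Fin.cons_succ, h0]
        simpa using hsum
    · set ε0 : ℤ := if e ≤ -2 then -1 else 1 with hε0
      have hε0cases : ε0 = 1 ∨ ε0 = -1 := by
        rw [hε0]; split <;> simp
      have hkey : -S' ≤ e - 2 * ε0 ∧ e - 2 * ε0 ≤ S' ∧ (4 : ℤ) ∣ S' - (e - 2 * ε0) := by
        rw [h0] at he hmod
        push_cast at he hmod
        rw [hε0]
        by_cases h1 : e ≤ -2 <;> simp [h1] <;> omega
      obtain ⟨ε', hε', hsum⟩ := ih (fun i => P i.succ) (fun i => hP i.succ) (e - 2 * ε0)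
        (show |e - 2 * ε0| ≤ S' by rw [abs_le]; exact ⟨hkey.1, hkey.2.1⟩)
        (show (4:ℤ) ∣ S' - (e - 2*ε0) from hkey.2.2)
      refine ⟨Fin.cons ε0 ε', ?_, ?_⟩
      · intro i
        refine Fin.cases hε0cases (fun j => hε' j) i
      · rw [Fin.sum_univ_succ]
        simp only [Fin.cons_zero, Fin.cons_succ, h0]
        push_cast
        rw [hsum]
        ring

/-- if `P : Fin n → ℕ` takes values in `{0,2}` and `S = ∑ i, P i`,
then `e ∈ ℤ` is a signed sum `∑ i, P i * ε i` with `ε i ∈ {1,-1}`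
if and only if `|e| ≤ S` and `e ≡ S (mod 4)`. -/
theorem signed_sum_iff_all_even (n : ℕ) (P : Fin n → ℕ)
    (hPeven : ∀ i, Even (P i)) (hP : ∀ i, P i ≤ 2) (e : ℤ) :
    (∃ ε : Fin n → ℤ, (∀ i, ε i = 1 ∨ ε i = -1) ∧ ∑ i, (P i : ℤ) * ε i = e) ↔
      |e| ≤ ∑ i, (P i : ℤ) ∧ e ≡ ∑ i, (P i : ℤ) [ZMOD 4] := by
  have hP' : ∀ i, P i = 0 ∨ P i = 2 := by
    intro i
    obtain ⟨r, hr⟩ := hPeven i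
    have := hP i
    omega
  constructor
  · rintro ⟨ε, hε, rfl⟩
    constructor
    · calc |∑ i, (P i : ℤ) * ε i| ≤ ∑ i, |(P i : ℤ) * ε i| := Finset.abs_sum_le_sum_abs _ _
        _ = ∑ i, (P i : ℤ) := by
          refine Finset.sum_congr rfl fun i _ => ?_
          rcases hε i with h | h <;> simp [h, abs_of_nonneg (show (0:ℤ) ≤ (P i : ℤ) by positivity)]
    · rw [Int.ModEq]
      have : (4 : ℤ) ∣ (∑ i, (P i : ℤ)) - ∑ i, (P i : ℤ) * ε i := by
        rw [← Finset.sum_sub_distrib]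
        refine Finset.dvd_sum fun i _ => ?_
        rcases hP' i with h | h <;> rcases hε i with h' | h' <;> simp [h, h']
      omega
  · rintro ⟨h1, h2⟩
    refine signed_sum_aux n P hP' e h1 ?_
    rw [Int.ModEq] at h2
    omega
end
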